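/- Let Γ be a group, R a real closed extension field of ℝ, C = R[i], and φ : ω(Γ) → C a completely positive ℂ-linear functional with φ(a*) = conj(φ(a)) for all a ∈ ω(Γ). Then for all s, h ∈ Γ: (i) |φ(c(s)*c(h))| ≤ (1/√2)·(φ(c(s)*c(s)) + φ(c(h)*c(h))), and (ii) φ(c(sh)*c(sh)) ≤ 2·(φ(c(s)*c(s)) + φ(c(h)*c(h))). -/

import Mathlib

open Polynomial Matrix

/-- A linearly ordered field is *real closed* if every nonnegative element is a square and
every polynomial of odd degree has a root. -/
def IsRealClosed' (R : Type*) [Field R] [LinearOrder R] [IsStrictOrderedRing R] : Prop :=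
  (∀ x : R, 0 ≤ x → ∃ y : R, y ^ 2 = x) ∧
    ∀ p : Polynomial R, Odd p.natDegree → ∃ x : R, p.IsRoot x

noncomputable section

set_option maxRecDepth 8000

/-- `Cplx R = R[i] = R[X]/(X² + 1)`. -/
abbrev Cplx (R : Type*) [CommRing R] : Type _ := AdjoinRoot (X ^ 2 + 1 : R[X])

namespace Cplx

variable (R : Type*) [CommRing R]

/-- The imaginary unit `i` of `R[i]`. -/
def I : Cplx R := AdjoinRoot.root _

theorem I_sq : (I R) ^ 2 = -1 := by
  have h : (I R) ^ 2 + 1 = 0 := by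
    have h := AdjoinRoot.eval₂_root (X ^ 2 + 1 : R[X])
    simp only [eval₂_add, eval₂_pow, eval₂_X, eval₂_one] at h
    exact h
  exact eq_neg_of_add_eq_zero_left h

variable {R}

/-- Conjugation on `R[i]`: the `R`-algebra involution determined by `i ↦ -i`. -/
def conj : Cplx R →+* Cplx R :=
  AdjoinRoot.lift (algebraMap R _) (-(I R)) (by
    have h : (I R) ^ 2 + 1 = 0 := by
      have h := AdjoinRoot.eval₂_root (X ^ 2 + 1 : R[X])
      simp only [eval₂_add, eval₂_pow, eval₂_X, eval₂_one] at h
      exact h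
    simp only [eval₂_add, eval₂_pow, eval₂_X, eval₂_one]
    calc (-(I R)) ^ 2 + 1 = (I R) ^ 2 + 1 := by ring
    _ = 0 := h)

/-- `z ∈ R[i]` is *nonnegative* if it lies in `R` and is nonnegative there. -/
def nonneg {R' : Type*} [Field R'] [LinearOrder R'] [IsStrictOrderedRing R'] (z : Cplx R') : Prop :=
  ∃ r : R', 0 ≤ r ∧ z = algebraMap R' (Cplx R') r

/-- `z ∈ R[i]` is *positive* if it lies in `R` and is positive there. -/
def pos {R' : Type*} [Field R'] [LinearOrder R'] [IsStrictOrderedRing R'] (z : Cplx R') : Prop :=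
  ∃ r : R', 0 < r ∧ z = algebraMap R' (Cplx R') r

/-- The embedding `ℂ = ℝ[i] → R[i]` induced by an embedding `f : ℝ → R`,
`x + y·i ↦ f x + f y · i`. -/
def emb (f : ℝ →+* R) : ℂ →+* Cplx R where
  toFun z := algebraMap R (Cplx R) (f z.re) + algebraMap R (Cplx R) (f z.im) * I R
  map_one' := by simp
  map_zero' := by simp
  map_add' z w := by
    simp only [Complex.add_re, Complex.add_im, map_add]
    ring
  map_mul' z w := by
    have hI : (I R) ^ 2 = -1 := I_sq R
    simp only [Complex.mul_re, Complex.mul_im, map_add, map_sub, _root_.map_mul]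
    linear_combination (-(algebraMap R (Cplx R) (f z.im) * algebraMap R (Cplx R) (f w.im))) * hI

/-- A matrix with entries in `R[i]` is positive semidefinite if
`∑ⱼₖ conj(zⱼ)·zₖ·Mⱼₖ ≥ 0` for all vectors `z`. -/
def PSD {R' : Type*} [Field R'] [LinearOrder R'] [IsStrictOrderedRing R'] {m : ℕ}
    (M : Matrix (Fin m) (Fin m) (Cplx R')) : Prop :=
  ∀ z : Fin m → Cplx R', Cplx.nonneg (∑ j, ∑ k, Cplx.conj (z j) * z k * M j k)

end Cplx

universe u v


variable (Γ : Type u) [Group Γ]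

/-- The involution of the complex group algebra `ℂ[Γ]`:
`(∑ a_g·g)* = ∑ conj(a_g)·g⁻¹`. -/
def gstar (a : MonoidAlgebra ℂ Γ) : MonoidAlgebra ℂ Γ :=
  a.coeff.sum fun g c => MonoidAlgebra.single g⁻¹ (starRingEnd ℂ c)

/-- The `ℓ¹`-norm of an element of `ℂ[Γ]`: `‖∑ a_g·g‖₁ = ∑ |a_g|`. -/
def l1norm (a : MonoidAlgebra ℂ Γ) : ℝ :=
  a.coeff.sum fun _ c => ‖c‖

/-- The set `Σ²ℂ[Γ]` of sums of hermitian squares in the group algebra. -/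
def SOS : Set (MonoidAlgebra ℂ Γ) :=
  {x | ∃ (n : ℕ) (a : Fin n → MonoidAlgebra ℂ Γ), x = ∑ i, gstar Γ (a i) * a i}

/-- The hermitian elements `ℂ[Γ]^h = {a : a* = a}`. -/
def herm : Set (MonoidAlgebra ℂ Γ) := {a | gstar Γ a = a}

/-- The augmentation homomorphism `ε : ℂ[Γ] → ℂ`, `∑ a_g·g ↦ ∑ a_g`. -/
def aug : MonoidAlgebra ℂ Γ →ₐ[ℂ] ℂ := MonoidAlgebra.lift ℂ ℂ Γ 1

/-- The augmentation ideal `ω(Γ) = ker ε`. -/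
def omega : Set (MonoidAlgebra ℂ Γ) := {a | aug Γ a = 0}

/-- The hermitian part `ω(Γ)^h` of the augmentation ideal. -/
def omegaH : Set (MonoidAlgebra ℂ Γ) := {a | a ∈ omega Γ ∧ gstar Γ a = a}

/-- `Σ²ω(Γ)`: sums of hermitian squares of elements of the augmentation ideal. -/
def SOSomega : Set (MonoidAlgebra ℂ Γ) :=
  {x | ∃ (n : ℕ) (a : Fin n → MonoidAlgebra ℂ Γ),
    (∀ i, a i ∈ omega Γ) ∧ x = ∑ i, gstar Γ (a i) * a i}

/-- `ω²(Γ)`, the `ℂ`-span of products of two elements of the augmentation ideal. -/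
def omegaSq : Set (MonoidAlgebra ℂ Γ) :=
  (Submodule.span ℂ {x : MonoidAlgebra ℂ Γ |
    ∃ a ∈ omega Γ, ∃ b ∈ omega Γ, x = a * b} : Submodule ℂ (MonoidAlgebra ℂ Γ))

/-- `c(g) = g - 1 ∈ ω(Γ)`. -/
def cE (g : Γ) : MonoidAlgebra ℂ Γ := MonoidAlgebra.of ℂ Γ g - 1

/-- The Laplace operator `Δ(S) = |S| - ∑_{s ∈ S} s` of a finite subset `S ⊆ Γ`. -/
def Delta (S : Finset Γ) : MonoidAlgebra ℂ Γ :=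
  (S.card : MonoidAlgebra ℂ Γ) - ∑ s ∈ S, MonoidAlgebra.of ℂ Γ s


section OmegaFunctional

variable {R : Type v} [Field R] [LinearOrder R] [IsStrictOrderedRing R]
variable {G : Type u} [Group G]

/-- The conjugate transpose of a matrix over `ℂ[Γ]`: `(M*)ⱼₖ = (Mₖⱼ)*`. -/
def mstar {m : ℕ} (M : Matrix (Fin m) (Fin m) (MonoidAlgebra ℂ G)) :
    Matrix (Fin m) (Fin m) (MonoidAlgebra ℂ G) := fun j k => gstar G (M k j)

/-- `φ : ω(Γ) → C = R[i]` is `ℂ`-linear and satisfies `φ(a*) = conj (φ a)`.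
(A functional on the augmentation ideal is encoded as a total map on `ℂ[Γ]`, with all
conditions imposed only on `ω(Γ)`.) -/
def OmegaHermLinear (f : ℝ →+* R) (φ : MonoidAlgebra ℂ G → Cplx R) : Prop :=
  (∀ a b : MonoidAlgebra ℂ G, a ∈ omega G → b ∈ omega G → φ (a + b) = φ a + φ b) ∧
  (∀ (c : ℂ) (a : MonoidAlgebra ℂ G), a ∈ omega G → φ (c • a) = Cplx.emb f c * φ a) ∧
  (∀ a : MonoidAlgebra ℂ G, a ∈ omega G → φ (gstar G a) = Cplx.conj (φ a))

/-- `φ : ω(Γ) → C = R[i]` is *completely positive*: for every `m`, the entrywise map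
`Mₘ(ω(Γ)) → Mₘ(C)` sends sums of hermitian squares to positive semidefinite matrices. -/
def OmegaCompletelyPositive (φ : MonoidAlgebra ℂ G → Cplx R) : Prop :=
  ∀ (m n : ℕ) (B : Fin n → Matrix (Fin m) (Fin m) (MonoidAlgebra ℂ G)),
    (∀ l j k, B l j k ∈ omega G) →
    Cplx.PSD (fun j k => φ ((∑ l, mstar (B l) * B l) j k))

/-- `φ : ω(Γ) → C = R[i]` is *positive*: `φ(a*a) ≥ 0` for all `a ∈ ω(Γ)`. -/
def OmegaPositive (φ : MonoidAlgebra ℂ G → Cplx R) : Prop :=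
  ∀ a ∈ omega G, Cplx.nonneg (φ (gstar G a * a))

end OmegaFunctional

/-!
Write `A = φ(c(s)*c(s))`, `B = φ(c(h)*c(h))` and `Y = φ(c(s)*c(h))`. Positivity of `φ` on
`(c(s) + λ c(h))*(c(s) + λ c(h)) ∈ Σ²ω(Γ)` for `λ = ±1, ±i` gives `|2 Re Y| ≤ A + B` and
`|2 Im Y| ≤ A + B`, hence `|Y|² ≤ (A + B)² / 2`. For (ii), `c(sh) = c(s) + s c(h)` and
`(s c(h))*(s c(h)) = c(h)*c(h)`, so the parallelogram law
`(u + v)*(u + v) + (u - v)*(u - v) = 2 u*u + 2 v*v` together with `φ((u - v)*(u - v)) ≥ 0` gives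
`φ(c(sh)*c(sh)) ≤ 2 (A + B)`.
-/

namespace Cplx

section CommRing

variable {R : Type*} [CommRing R]

lemma conj_algebraMap (r : R) : conj (algebraMap R (Cplx R) r) = algebraMap R (Cplx R) r := by
  rw [AdjoinRoot.algebraMap_eq]
  exact AdjoinRoot.lift_of _

lemma conj_I : conj (I R) = -I R := AdjoinRoot.lift_root _

lemma conj_emb (f : ℝ →+* R) (z : ℂ) : conj (emb f z) = emb f (starRingEnd ℂ z) := by
  simp only [emb, RingHom.coe_mk, MonoidHom.coe_mk, OneHom.coe_mk, map_add, map_mul,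
    conj_algebraMap, conj_I, Complex.conj_re, Complex.conj_im, map_neg]
  ring

lemma emb_I (f : ℝ →+* R) : emb f Complex.I = I R := by
  simp [emb]

lemma mul_conj_add_mul_I (x y : R) :
    (algebraMap R (Cplx R) x + algebraMap R (Cplx R) y * I R) *
        conj (algebraMap R (Cplx R) x + algebraMap R (Cplx R) y * I R) =
      algebraMap R (Cplx R) (x ^ 2 + y ^ 2) := by
  simp only [map_add, map_mul, conj_algebraMap, conj_I, map_pow]
  linear_combination (-(algebraMap R (Cplx R) y) ^ 2) * I_sq R

lemma add_conj_add_mul_I (x y : R) :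
    algebraMap R (Cplx R) x + algebraMap R (Cplx R) y * I R +
        conj (algebraMap R (Cplx R) x + algebraMap R (Cplx R) y * I R) =
      algebraMap R (Cplx R) (2 * x) := by
  simp only [map_add, map_mul, conj_algebraMap, conj_I, map_ofNat]
  ring

lemma monic_X_sq_add_one : (X ^ 2 + 1 : R[X]).Monic := by
  simpa using monic_X_pow_add_C (1 : R) two_ne_zero

variable [Nontrivial R]

lemma natDegree_X_sq_add_one : (X ^ 2 + 1 : R[X]).natDegree = 2 := by
  simpa using natDegree_X_pow_add_C (n := 2) (r := (1 : R))

lemma exists_eq_add_mul_I (z : Cplx R) :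
    ∃ x y : R, z = algebraMap R (Cplx R) x + algebraMap R (Cplx R) y * I R := by
  obtain ⟨q, rfl⟩ := AdjoinRoot.mk_surjective z
  have hdeg : (q %ₘ (X ^ 2 + 1)).natDegree < 2 := by
    have hne : (X ^ 2 + 1 : R[X]) ≠ 1 := by simpa using (monic_X_pow (R := R) 2).ne_zero
    simpa [natDegree_X_sq_add_one] using natDegree_modByMonic_lt q monic_X_sq_add_one hne
  rw [← AdjoinRoot.mk_leftInverse monic_X_sq_add_one (AdjoinRoot.mk _ q),
    AdjoinRoot.modByMonicHom_mk]
  generalize q %ₘ (X ^ 2 + 1) = p at hdeg ⊢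
  refine ⟨p.coeff 0, p.coeff 1, ?_⟩
  conv_lhs => rw [eq_X_add_C_of_natDegree_le_one (Nat.le_of_lt_succ hdeg)]
  simp only [map_add, map_mul, AdjoinRoot.mk_C, AdjoinRoot.mk_X, AdjoinRoot.algebraMap_eq, I]
  ring

end CommRing

lemma algebraMap_injective {R : Type*} [CommRing R] [IsDomain R] :
    Function.Injective (algebraMap R (Cplx R)) := by
  rw [AdjoinRoot.algebraMap_eq]
  exact AdjoinRoot.of.injective_of_degree_ne_zero
    (by rw [degree_eq_natDegree monic_X_sq_add_one.ne_zero, natDegree_X_sq_add_one]; decide)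

variable {R : Type*} [Field R] [LinearOrder R] [IsStrictOrderedRing R]

lemma nonneg_algebraMap_iff {r : R} : nonneg (algebraMap R (Cplx R) r) ↔ 0 ≤ r :=
  ⟨fun ⟨_, hr, h⟩ => algebraMap_injective h ▸ hr, fun hr => ⟨r, hr, rfl⟩⟩

end Cplx

section GroupAlgebra

variable {G : Type*} [Group G]

lemma gstar_single (g : G) (c : ℂ) :
    gstar G (MonoidAlgebra.single g c) = MonoidAlgebra.single g⁻¹ (starRingEnd ℂ c) := by
  simp [gstar, Finsupp.sum_single_index]

lemma gstar_add (a b : MonoidAlgebra ℂ G) : gstar G (a + b) = gstar G a + gstar G b :=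
  Finsupp.sum_add_index' (by simp) (fun _ _ _ => by rw [map_add, MonoidAlgebra.single_add])

lemma gstar_smul (c : ℂ) (a : MonoidAlgebra ℂ G) :
    gstar G (c • a) = starRingEnd ℂ c • gstar G a := by
  induction a using MonoidAlgebra.induction_linear with
  | zero => simp [gstar]
  | add a b ha hb => rw [smul_add, gstar_add, gstar_add, ha, hb, smul_add]
  | single g d => rw [MonoidAlgebra.smul_single', gstar_single, gstar_single, map_mul,
      MonoidAlgebra.smul_single']

lemma gstar_mul (a b : MonoidAlgebra ℂ G) : gstar G (a * b) = gstar G b * gstar G a := by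
  induction a using MonoidAlgebra.induction_linear with
  | zero => simp [gstar]
  | add a a' ha ha' => rw [add_mul, gstar_add, gstar_add, ha, ha', mul_add]
  | single g c =>
    induction b using MonoidAlgebra.induction_linear with
    | zero => simp [gstar]
    | add b b' hb hb' => rw [mul_add, gstar_add, gstar_add, hb, hb', add_mul]
    | single g' c' =>
      simp only [MonoidAlgebra.single_mul_single, gstar_single, _root_.mul_inv_rev, map_mul]
      rw [mul_comm (starRingEnd ℂ c)]

lemma gstar_gstar (a : MonoidAlgebra ℂ G) : gstar G (gstar G a) = a := by
  induction a using MonoidAlgebra.induction_linear with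
  | zero => simp [gstar]
  | add a b ha hb => rw [gstar_add, gstar_add, ha, hb]
  | single g c => simp [gstar_single]

lemma gstar_of_mul_mul_self (g : G) (a : MonoidAlgebra ℂ G) :
    gstar G (MonoidAlgebra.of ℂ G g * a) * (MonoidAlgebra.of ℂ G g * a) = gstar G a * a := by
  have hg : gstar G (MonoidAlgebra.of ℂ G g) * MonoidAlgebra.of ℂ G g = 1 := by
    simp [gstar_single, MonoidAlgebra.single_mul_single, MonoidAlgebra.one_def]
  rw [gstar_mul, mul_assoc, ← mul_assoc (gstar G (MonoidAlgebra.of ℂ G g)), hg, one_mul]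

lemma omega_add {a b : MonoidAlgebra ℂ G} (ha : a ∈ omega G) (hb : b ∈ omega G) :
    a + b ∈ omega G :=
  Ideal.add_mem (RingHom.ker (aug G)) ha hb

lemma omega_smul (c : ℂ) {a : MonoidAlgebra ℂ G} (ha : a ∈ omega G) : c • a ∈ omega G :=
  Submodule.smul_of_tower_mem (RingHom.ker (aug G)) c ha

lemma omega_mul_left (a : MonoidAlgebra ℂ G) {b : MonoidAlgebra ℂ G} (hb : b ∈ omega G) :
    a * b ∈ omega G :=
  Ideal.mul_mem_left (RingHom.ker (aug G)) a hb

lemma cE_mem_omega (g : G) : cE G g ∈ omega G := by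
  simp [omega, cE, aug, MonoidAlgebra.lift_single]

lemma cE_mul (s h : G) : cE G (s * h) = cE G s + MonoidAlgebra.of ℂ G s * cE G h := by
  simp only [cE, map_mul, mul_sub, mul_one]
  abel

end GroupAlgebra

lemma le_mul_add_of_sq_eq_add_sq {R : Type*} [Field R] [LinearOrder R] [IsStrictOrderedRing R]
    {a b c t x y : R} (hc : 0 ≤ c) (hc2 : c ^ 2 = 2⁻¹) (ht : 0 ≤ t) (htxy : t ^ 2 = x ^ 2 + y ^ 2)
    (hx : |2 * x| ≤ a + b) (hy : |2 * y| ≤ a + b) : t ≤ c * (a + b) := by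
  have hab : 0 ≤ a + b := (abs_nonneg _).trans hx
  have hx2 : (2 * x) ^ 2 ≤ (a + b) ^ 2 := sq_le_sq' (abs_le.1 hx).1 (abs_le.1 hx).2
  have hy2 : (2 * y) ^ 2 ≤ (a + b) ^ 2 := sq_le_sq' (abs_le.1 hy).1 (abs_le.1 hy).2
  refine (pow_le_pow_iff_left₀ ht (mul_nonneg hc hab) two_ne_zero).1 ?_
  rw [mul_pow, hc2, htxy]
  linarith

lemma OmegaCompletelyPositive.omegaPositive {R : Type*} [Field R] [LinearOrder R]
    [IsStrictOrderedRing R] {G : Type*} [Group G] {φ : MonoidAlgebra ℂ G → Cplx R}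
    (hφ : OmegaCompletelyPositive φ) :
    OmegaPositive φ := fun a ha => by
  simpa [Matrix.mul_apply, mstar] using
    hφ 1 1 (fun _ => Matrix.of fun _ _ => a) (fun _ _ _ => ha) (fun _ => 1)

namespace OmegaHermLinear

variable {R : Type*} [Field R] {G : Type*} [Group G] {φ : MonoidAlgebra ℂ G → Cplx R}
  {u v : MonoidAlgebra ℂ G} {f : ℝ →+* R} (hφ : OmegaHermLinear f φ)
include hφ

lemma map_add (hu : u ∈ omega G) (hv : v ∈ omega G) : φ (u + v) = φ u + φ v :=
  hφ.1 u v hu hv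

lemma map_smul (c : ℂ) (hu : u ∈ omega G) : φ (c • u) = Cplx.emb f c * φ u :=
  hφ.2.1 c u hu

lemma map_gstar_mul_swap (hv : v ∈ omega G) :
    φ (gstar G v * u) = Cplx.conj (φ (gstar G u * v)) := by
  rw [← hφ.2.2 _ (omega_mul_left _ hv), gstar_mul, gstar_gstar]

lemma map_gstar_add_smul_mul_self (hu : u ∈ omega G) (hv : v ∈ omega G) (l : ℂ)
    (hl : l * starRingEnd ℂ l = 1) :
    φ (gstar G (u + l • v) * (u + l • v)) =
      φ (gstar G u * u) + φ (gstar G v * v) +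
        (Cplx.emb f l * φ (gstar G u * v) + Cplx.conj (Cplx.emb f l * φ (gstar G u * v))) := by
  have expand : gstar G (u + l • v) * (u + l • v) =
      gstar G u * u + gstar G v * v +
        (l • (gstar G u * v) + starRingEnd ℂ l • (gstar G v * u)) := by
    simp only [gstar_add, gstar_smul, add_mul, mul_add, smul_mul_assoc, mul_smul_comm, smul_add,
      smul_smul, hl, one_smul]
    abel
  have huu := omega_mul_left (gstar G u) hu
  have hvv := omega_mul_left (gstar G v) hv
  have huv := omega_mul_left (gstar G u) hv
  have hvu := omega_mul_left (gstar G v) hu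
  rw [expand, hφ.map_add (omega_add huu hvv) (omega_add (omega_smul _ huv) (omega_smul _ hvu)),
    hφ.map_add huu hvv, hφ.map_add (omega_smul _ huv) (omega_smul _ hvu), hφ.map_smul _ huv,
    hφ.map_smul _ hvu, hφ.map_gstar_mul_swap (u := u) hv, map_mul, Cplx.conj_emb]

variable [LinearOrder R] [IsStrictOrderedRing R] (hpos : OmegaPositive φ)
include hpos

lemma abs_two_mul_le (hu : u ∈ omega G) (hv : v ∈ omega G) {a b x y : R}
    (ha : φ (gstar G u * u) = algebraMap R (Cplx R) a)
    (hb : φ (gstar G v * v) = algebraMap R (Cplx R) b)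
    (hY : φ (gstar G u * v) = algebraMap R (Cplx R) x + algebraMap R (Cplx R) y * Cplx.I R) :
    |2 * x| ≤ a + b ∧ |2 * y| ≤ a + b := by
  have re_bound : ∀ (l : ℂ) (x' y' : R), l * starRingEnd ℂ l = 1 →
      Cplx.emb f l * φ (gstar G u * v) =
        algebraMap R (Cplx R) x' + algebraMap R (Cplx R) y' * Cplx.I R →
      0 ≤ a + b + 2 * x' := by
    intro l x' y' hl hl'
    have := hpos _ (omega_add hu (omega_smul l hv))
    rwa [hφ.map_gstar_add_smul_mul_self hu hv l hl, ha, hb, hl', Cplx.add_conj_add_mul_I,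
      ← _root_.map_add, ← _root_.map_add, Cplx.nonneg_algebraMap_iff] at this
  have h₁ := re_bound 1 x y (by simp) (by rw [map_one, one_mul, hY])
  have h₂ := re_bound (-1) (-x) (-y) (by simp) (by
    rw [map_neg, map_one, hY, map_neg, map_neg]; ring)
  have h₃ := re_bound Complex.I (-y) x (by simp) (by
    rw [Cplx.emb_I, hY, map_neg]; linear_combination (algebraMap R (Cplx R) y) * Cplx.I_sq R)
  have h₄ := re_bound (-Complex.I) y (-x) (by simp) (by
    rw [map_neg, Cplx.emb_I, hY, map_neg]
    linear_combination (-algebraMap R (Cplx R) y) * Cplx.I_sq R)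
  exact ⟨abs_le.2 ⟨by linarith, by linarith⟩, abs_le.2 ⟨by linarith, by linarith⟩⟩

lemma abs_map_gstar_mul_le (hu : u ∈ omega G) (hv : v ∈ omega G) {c t : R} (hc : 0 ≤ c)
    (hc2 : c ^ 2 = 2⁻¹) (ht : 0 ≤ t)
    (hteq : algebraMap R (Cplx R) (t ^ 2) =
      φ (gstar G u * v) * Cplx.conj (φ (gstar G u * v))) :
    Cplx.nonneg (algebraMap R (Cplx R) c * (φ (gstar G u * u) + φ (gstar G v * v)) -
      algebraMap R (Cplx R) t) := by
  obtain ⟨a, -, ha⟩ := hpos u hu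
  obtain ⟨b, -, hb⟩ := hpos v hv
  obtain ⟨x, y, hY⟩ := Cplx.exists_eq_add_mul_I (φ (gstar G u * v))
  rw [hY, Cplx.mul_conj_add_mul_I] at hteq
  obtain ⟨hx, hy⟩ := hφ.abs_two_mul_le hpos hu hv ha hb hY
  rw [ha, hb, ← _root_.map_add, ← map_mul, ← map_sub, Cplx.nonneg_algebraMap_iff, sub_nonneg]
  exact le_mul_add_of_sq_eq_add_sq hc hc2 ht (Cplx.algebraMap_injective hteq) hx hy

lemma nonneg_two_mul_sub_map_gstar_add_mul_add (hu : u ∈ omega G) (hv : v ∈ omega G) :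
    Cplx.nonneg (2 * (φ (gstar G u * u) + φ (gstar G v * v)) -
      φ (gstar G (u + v) * (u + v))) := by
  have hplus := hφ.map_gstar_add_smul_mul_self hu hv 1 (by simp)
  have hminus := hφ.map_gstar_add_smul_mul_self hu hv (-1) (by simp)
  rw [one_smul] at hplus
  convert hpos _ (omega_add hu (omega_smul (-1) hv)) using 1
  rw [hplus, hminus, map_one, one_mul, map_neg, map_one, neg_one_mul, _root_.map_neg]
  ring

end OmegaHermLinear

theorem omega_cp_bounds {R : Type v} [Field R] [LinearOrder R] [IsStrictOrderedRing R] (f : ℝ →+*o R)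
    (φ : MonoidAlgebra ℂ Γ → Cplx R)
    (hlin : OmegaHermLinear f.toRingHom φ) (hcp : OmegaCompletelyPositive φ)
    (s h : Γ) :
    (∀ t : R, 0 ≤ t →
      algebraMap R (Cplx R) (t ^ 2) =
        φ (gstar Γ (cE Γ s) * cE Γ h) * Cplx.conj (φ (gstar Γ (cE Γ s) * cE Γ h)) →
      Cplx.nonneg (algebraMap R (Cplx R) (f (Real.sqrt 2)⁻¹) *
          (φ (gstar Γ (cE Γ s) * cE Γ s) + φ (gstar Γ (cE Γ h) * cE Γ h)) -
        algebraMap R (Cplx R) t)) ∧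
    Cplx.nonneg (2 * (φ (gstar Γ (cE Γ s) * cE Γ s) + φ (gstar Γ (cE Γ h) * cE Γ h)) -
      φ (gstar Γ (cE Γ (s * h)) * cE Γ (s * h))) := by
  have hpos := hcp.omegaPositive
  have hs := cE_mem_omega s
  have hh := cE_mem_omega h
  have hc : 0 ≤ f (Real.sqrt 2)⁻¹ := by
    simpa using f.monotone' (by positivity : 0 ≤ (Real.sqrt 2)⁻¹)
  have hc2 : f (Real.sqrt 2)⁻¹ ^ 2 = 2⁻¹ := by
    rw [← map_pow, inv_pow, Real.sq_sqrt zero_le_two, map_inv₀, map_ofNat]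
  refine ⟨fun t ht hteq => hlin.abs_map_gstar_mul_le hpos hs hh hc hc2 ht hteq, ?_⟩
  have := hlin.nonneg_two_mul_sub_map_gstar_add_mul_add hpos hs (omega_mul_left (.of ℂ Γ s) hh)
  rwa [← cE_mul, gstar_of_mul_mul_self] at this
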